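/- arXiv:2603.07526 — 3 statements merged into one kernel-verified Lean document; each statement's English description precedes it below -/
import Mathlib

section
/- Fix τ ∈ (0,1). There exist c(τ) > 0 and n₀ such that for all n ≥ n₀ and all real x with τ < |x| ≤ πn, one has Σ_{i=1}^n sin²(x·i/(2n)) ≥ c(τ)·n. -/
/-!
Put `θ = |x| / (2n) ∈ (τ / (2n), π / 2]` and `S = ∑_{i ≤ n} sin² (iθ)`.
If `nθ ≤ π / 2`, all angles `iθ` lie in `[0, π / 2]`, where Jordan's inequality
`sin t ≥ 2t / π` gives `S ≥ (2θ/π)² ∑ i² ≥ (2nθ)² n / (3π²) ≥ τ² n / (3π²)`.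
If `nθ > π / 2`, then `n sin θ > 1`, and writing `sin² = (1 - cos 2·) / 2` the
Dirichlet-kernel identity bounds the cosine sum by `1 / (2 sin θ) < n / 2`, so `S ≥ n / 4`.
-/

open Real Finset

lemma two_mul_sin_mul_sum_cos (θ : ℝ) (n : ℕ) :
    2 * sin θ * ∑ i ∈ Icc 1 n, cos (2 * i * θ) = sin ((2 * n + 1) * θ) - sin θ := by
  induction n with
  | zero => simp
  | succ n ih =>
    rw [sum_Icc_succ_top (by omega), mul_add, ih]
    have h := sin_sub_sin ((2 * (n + 1 : ℕ) + 1) * θ) ((2 * n + 1) * θ)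
    push_cast at h ⊢
    rw [show ((2 * ((n : ℝ) + 1) + 1) * θ - (2 * n + 1) * θ) / 2 = θ by ring,
      show ((2 * ((n : ℝ) + 1) + 1) * θ + (2 * n + 1) * θ) / 2 = 2 * ((n : ℝ) + 1) * θ by ring]
      at h
    linarith

lemma cube_div_three_le_sum_sq (n : ℕ) : (n : ℝ) ^ 3 / 3 ≤ ∑ i ∈ Icc 1 n, (i : ℝ) ^ 2 := by
  induction n with
  | zero => simp
  | succ n ih =>
    rw [sum_Icc_succ_top (by omega)]
    push_cast
    nlinarith [Nat.cast_nonneg (α := ℝ) n]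

lemma sum_sin_sq_eq (θ : ℝ) (n : ℕ) :
    ∑ i ∈ Icc 1 n, sin (i * θ) ^ 2 = n / 2 - (∑ i ∈ Icc 1 n, cos (2 * i * θ)) / 2 := by
  have h (i : ℕ) : sin (i * θ) ^ 2 = 1 / 2 - cos (2 * i * θ) / 2 := by
    rw [sin_sq, cos_sq, mul_assoc]; ring
  simp only [h, sum_sub_distrib, sum_const, Nat.card_Icc, Nat.add_sub_cancel, nsmul_eq_mul,
    ← sum_div]
  ring

lemma sum_sin_sq_ge_of_small_angle {θ : ℝ} {n : ℕ} (hθ : 0 ≤ θ) (hnθ : n * θ ≤ π / 2) :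
    (2 * n * θ) ^ 2 * n / (3 * π ^ 2) ≤ ∑ i ∈ Icc 1 n, sin (i * θ) ^ 2 := by
  have jordan : ∀ i ∈ Icc 1 n, (2 / π * θ) ^ 2 * (i : ℝ) ^ 2 ≤ sin (i * θ) ^ 2 := by
    intro i hi
    have hin : (i : ℝ) ≤ n := by exact_mod_cast (mem_Icc.mp hi).2
    have hiθ : (i : ℝ) * θ ≤ π / 2 := by nlinarith
    have h := mul_le_sin (by positivity) hiθ
    calc (2 / π * θ) ^ 2 * (i : ℝ) ^ 2 = (2 / π * (i * θ)) ^ 2 := by ring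
      _ ≤ sin (i * θ) ^ 2 := pow_le_pow_left₀ (by positivity) h 2
  calc (2 * n * θ) ^ 2 * n / (3 * π ^ 2) = (2 / π * θ) ^ 2 * ((n : ℝ) ^ 3 / 3) := by
        field_simp
    _ ≤ (2 / π * θ) ^ 2 * ∑ i ∈ Icc 1 n, (i : ℝ) ^ 2 := by
        gcongr; exact cube_div_three_le_sum_sq n
    _ ≤ ∑ i ∈ Icc 1 n, sin (i * θ) ^ 2 := by
        rw [mul_sum]; exact sum_le_sum jordan

lemma sum_sin_sq_ge_of_one_le_mul_sin {θ : ℝ} {n : ℕ} (h : 1 ≤ n * sin θ) :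
    n / 4 ≤ ∑ i ∈ Icc 1 n, sin (i * θ) ^ 2 := by
  have hsin : 0 < sin θ := by
    by_contra! hle
    nlinarith [Nat.cast_nonneg (α := ℝ) n]
  have hcos : ∑ i ∈ Icc 1 n, cos (2 * i * θ) ≤ (1 - sin θ) / (2 * sin θ) := by
    rw [le_div_iff₀ (by positivity)]
    nlinarith [two_mul_sin_mul_sum_cos θ n, sin_le_one ((2 * n + 1) * θ)]
  have hfrac : (1 - sin θ) / (2 * sin θ) ≤ n / 2 := by
    rw [div_le_iff₀ (by positivity)]
    nlinarith
  rw [sum_sin_sq_eq]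
  linarith

lemma min_mul_le_sum_sin_sq {τ θ : ℝ} {n : ℕ} (hτ : 0 ≤ τ) (hτθ : τ ≤ 2 * n * θ)
    (hθ0 : 0 ≤ θ) (hθ : θ ≤ π / 2) :
    min (τ ^ 2 / (3 * π ^ 2)) (1 / 4) * n ≤ ∑ i ∈ Icc 1 n, sin (i * θ) ^ 2 := by
  have hn : (0 : ℝ) ≤ n := Nat.cast_nonneg n
  rcases le_or_gt (n * θ) (π / 2) with hsmall | hlarge
  · calc min (τ ^ 2 / (3 * π ^ 2)) (1 / 4) * n ≤ τ ^ 2 / (3 * π ^ 2) * n := by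
          gcongr; exact min_le_left _ _
      _ ≤ (2 * n * θ) ^ 2 * n / (3 * π ^ 2) := by
          rw [div_mul_eq_mul_div]; gcongr
      _ ≤ _ := sum_sin_sq_ge_of_small_angle hθ0 hsmall
  · have hsin : 1 ≤ n * sin θ := by
      have h := mul_le_mul_of_nonneg_left (mul_le_sin hθ0 hθ) hn
      calc (1 : ℝ) ≤ n * (2 / π * θ) := by
            rw [show (n : ℝ) * (2 / π * θ) = 2 * (n * θ) / π by ring, one_le_div pi_pos]
            linarith
        _ ≤ n * sin θ := h
    calc min (τ ^ 2 / (3 * π ^ 2)) (1 / 4) * (n : ℝ) ≤ 1 / 4 * n := by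
          gcongr; exact min_le_right _ _
      _ = n / 4 := by ring
      _ ≤ _ := sum_sin_sq_ge_of_one_le_mul_sin hsin

theorem stmt6 (τ : ℝ) (hτ : τ ∈ Set.Ioo (0:ℝ) 1) :
    ∃ c > (0:ℝ), ∃ n₀ : ℕ, ∀ n : ℕ, n₀ ≤ n → ∀ x : ℝ,
      τ < |x| → |x| ≤ Real.pi * n →
      c * n ≤ ∑ i ∈ Finset.Icc 1 n, Real.sin (x * i / (2 * n)) ^ 2 := by
  refine ⟨min (τ ^ 2 / (3 * π ^ 2)) (1 / 4), by have := hτ.1; positivity, 1, ?_⟩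
  intro n hn x hτx hxπ
  have hn0 : (0 : ℝ) < n := by exact_mod_cast hn
  have hsin_abs (i : ℕ) : sin (x * i / (2 * n)) ^ 2 = sin (i * (|x| / (2 * n))) ^ 2 := by
    rcases abs_choice x with h | h <;> rw [h]
    · ring_nf
    · rw [show (i : ℝ) * (-x / (2 * n)) = -(x * i / (2 * n)) by ring, sin_neg, neg_sq]
  simp only [hsin_abs]
  refine min_mul_le_sum_sin_sq hτ.1.le ?_ (by positivity) ?_
  · rw [mul_div_cancel₀ _ (by positivity)]; exact hτx.le
  · rw [div_le_iff₀ (by positivity)]; linarith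
end

section
/- For n ≥ 3 and 2π < |x| ≤ πn, setting t = |x|/(2n), one has Σ_{i=1}^n sin²(it) > n/4. -/
/-!
Since `sin² (i t) = (1 - cos (2 i t)) / 2` and `2 sin t cos (2 i t) = sin ((2i+1) t) - sin ((2i-1) t)`
telescopes, `4 sin t · Σ_{i=1}^n sin² (i t) = (2n+1) sin t - sin ((2n+1) t)`. Hence the sum exceeds
`n / 4` as soon as `(n+1) sin t > 1`. For `t = |x| / (2n) ∈ (0, π/2]`, Jordan's inequality gives
`n sin t ≥ (2/π) n t = |x| / π > 2`.
-/

open Real Finset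

theorem four_mul_sin_mul_sum_sin_sq (t : ℝ) (n : ℕ) :
    4 * sin t * ∑ i ∈ Icc 1 n, sin (i * t) ^ 2 = (2 * n + 1) * sin t - sin ((2 * n + 1) * t) := by
  induction n with
  | zero => simp
  | succ m ih =>
    rw [sum_Icc_succ_top (by omega), mul_add, ih]
    have half_angle : sin ((m + 1 : ℕ) * t) ^ 2 = 1 / 2 - cos (2 * ((m + 1 : ℕ) * t)) / 2 :=
      sin_sq_eq_half_sub _
    have product_to_sum := two_mul_sin_mul_cos t (2 * ((m + 1 : ℕ) * t))
    push_cast at half_angle product_to_sum ⊢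
    rw [half_angle]
    rw [show t - 2 * ((m + 1) * t) = -((2 * m + 1) * t) by ring, sin_neg,
      show t + 2 * ((m + 1) * t) = (2 * (m + 1) + 1) * t by ring] at product_to_sum
    linear_combination (-1 : ℝ) * product_to_sum

theorem quarter_lt_sum_sin_sq {t : ℝ} {n : ℕ} (hn : 1 < (n + 1) * sin t) :
    (n : ℝ) / 4 < ∑ i ∈ Icc 1 n, sin (i * t) ^ 2 := by
  refine lt_of_mul_lt_mul_left ?_ (by nlinarith : (0 : ℝ) ≤ 4 * sin t)
  rw [four_mul_sin_mul_sum_sin_sq]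
  linarith [sin_le_one ((2 * n + 1) * t)]

theorem stmt7_general (n : ℕ) (x : ℝ)
    (h1 : 2 * Real.pi < |x|) (h2 : |x| ≤ Real.pi * n) :
    (n : ℝ) / 4 < ∑ i ∈ Finset.Icc 1 n, Real.sin ((i : ℝ) * (|x| / (2 * n))) ^ 2 := by
  have hn0 : (0 : ℝ) < n := by nlinarith [pi_pos]
  set t := |x| / (2 * n) with ht
  have ht0 : 0 < t := by
    have : 0 < |x| := by linarith [pi_pos]
    positivity
  have ht_le : t ≤ π / 2 := by
    rw [ht, div_le_iff₀ (by positivity)]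
    linarith
  have jordan : 2 / π * t ≤ sin t := mul_le_sin ht0.le ht_le
  have sin_pos : 0 < sin t := jordan.trans_lt' (by positivity)
  have two_lt : 2 < n * sin t :=
    calc (2 : ℝ) < |x| / π := by rw [lt_div_iff₀ pi_pos]; linarith
      _ = n * (2 / π * t) := by rw [ht]; field_simp
      _ ≤ n * sin t := by gcongr
  exact quarter_lt_sum_sin_sq (by linarith)

theorem stmt7 (n : ℕ) (hn : 3 ≤ n) (x : ℝ)
    (h1 : 2 * Real.pi < |x|) (h2 : |x| ≤ Real.pi * n) :
    (n : ℝ) / 4 < ∑ i ∈ Finset.Icc 1 n, Real.sin ((i : ℝ) * (|x| / (2 * n))) ^ 2 :=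
  stmt7_general n x h1 h2
end

section
/- Consider a random codebook with M codewords drawn i.i.d. from P_X̲ and a decoder that selects the codeword minimizing a metric D(x̲, y̲). Then the ensemble-average error probability ε(n,M) satisfies ε(n,M) ≤ E[min{1, (M−1)·Pr[D(X̲̂, Y̲) ≤ D(X̲, Y̲) | X̲, Y̲]}], where (X̲, Y̲, X̲̂) ~ P_X̲(x̲) P_{Y̲|X̲}(y̲|x̲) P_X̲(x̲̂). -/
open MeasureTheory ProbabilityTheory Set Function
open scoped ENNReal NNReal

lemma pi_eval_pre {ι : Type*} [Fintype ι] {α : Type*} [MeasurableSpace α]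
    (P : Measure α) [IsProbabilityMeasure P] (i : ι) (A : Set α) :
    Measure.pi (fun _ : ι => P) (Function.eval i ⁻¹' A) = P A := by
  classical
  rw [Set.eval_preimage, Measure.pi_pi]
  have h : ∀ j, P (Function.update (fun _ : ι => (Set.univ : Set α)) i A j)
      = if j = i then P A else 1 := by
    intro j
    rcases eq_or_ne j i with rfl | h
    · simp
    · simp [Function.update_of_ne h, h]
  simp_rw [h]
  simp

theorem stmt19 {α β : Type*} [MeasurableSpace α] [MeasurableSpace β]
    (P : Measure α) [IsProbabilityMeasure P]
    (κ : Kernel α β) [IsMarkovKernel κ]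
    (M : ℕ) [NeZero M] (hM : 1 ≤ M)
    (D : α → β → ℝ) (hD : Measurable fun p : α × β => D p.1 p.2)
    (φ : (Fin M → α) → β → Fin M)
    (hφ : ∀ (c : Fin M → α) (y : β) (m : Fin M), D (c (φ c y)) y ≤ D (c m) y) :
    (((Measure.pi (fun _ : Fin M => P)) ⊗ₘ
        (κ.comap (fun c : Fin M → α => c 0) (measurable_pi_apply 0)))
        {p | φ p.1 p.2 ≠ 0}).toReal
      ≤ ∫ p : α × β,
          min 1 (((M:ℝ) - 1) * (P {x' | D x' p.2 ≤ D p.1 p.2}).toReal)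
          ∂(P ⊗ₘ κ) := by
  classical
  obtain ⟨n, rfl⟩ : ∃ n, M = n + 1 :=
    ⟨M - 1, (Nat.succ_pred_eq_of_pos (Nat.pos_of_ne_zero (NeZero.ne M))).symm⟩
  set PM1 := Measure.pi (fun _ : Fin (n+1) => P) with hPM1
  set PM2 := Measure.pi (fun _ : Fin n => P) with hPM2
  haveI : IsProbabilityMeasure PM1 := by rw [hPM1]; infer_instance
  haveI : IsProbabilityMeasure PM2 := by rw [hPM2]; infer_instance
  set κ0 := κ.comap (fun c : Fin (n+1) → α => c 0) (measurable_pi_apply 0) with hκ0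
  set μc := P ⊗ₘ κ with hμc
  -- measurability of the conditional probability
  have hPm : Measurable fun p : α × β => P {x' | D x' p.2 ≤ D p.1 p.2} := by
    have m1 : Measurable fun q : (α × β) × α => ((q.2, q.1.2) : α × β) :=
      measurable_snd.prodMk (measurable_snd.comp measurable_fst)
    have m2 : Measurable fun q : (α × β) × α => ((q.1.1, q.1.2) : α × β) :=
      (measurable_fst.comp measurable_fst).prodMk (measurable_snd.comp measurable_fst)
    have hs : MeasurableSet {q : (α × β) × α | D q.2 q.1.2 ≤ D q.1.1 q.1.2} :=
      measurableSet_le (hD.comp m1) (hD.comp m2)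
    exact measurable_measure_prodMk_left hs
  set g : α × β → ℝ≥0∞ := fun p => min 1 ((n : ℝ≥0∞) * P {x' | D x' p.2 ≤ D p.1 p.2})
    with hg_def
  have hg : Measurable g := measurable_const.min (measurable_const.mul hPm)
  -- Step A
  have stepA : (PM1 ⊗ₘ κ0) {p | φ p.1 p.2 ≠ 0} ≤ ∫⁻ p, g p ∂μc := by
    set E : Set ((Fin (n+1) → α) × β) :=
      {p | ∃ j, j ≠ 0 ∧ D (p.1 j) p.2 ≤ D (p.1 0) p.2} with hE_def
    have hE : MeasurableSet E := by
      have hEeq : E = ⋃ j : Fin (n+1), {p : (Fin (n+1) → α) × β |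
          j ≠ 0 ∧ D (p.1 j) p.2 ≤ D (p.1 0) p.2} := by
        ext p; simp [hE_def]
      rw [hEeq]
      refine MeasurableSet.iUnion fun j => ?_
      rw [Set.setOf_and]
      have m1 : Measurable fun p : (Fin (n+1) → α) × β => ((p.1 j, p.2) : α × β) :=
        ((measurable_pi_apply j).comp measurable_fst).prodMk measurable_snd
      have m2 : Measurable fun p : (Fin (n+1) → α) × β => ((p.1 0, p.2) : α × β) :=
        ((measurable_pi_apply 0).comp measurable_fst).prodMk measurable_snd
      exact (MeasurableSet.const _).inter
        (measurableSet_le (hD.comp m1) (hD.comp m2))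
    have hsub : {p : (Fin (n+1) → α) × β | φ p.1 p.2 ≠ 0} ⊆ E :=
      fun p hp => ⟨φ p.1 p.2, hp, hφ p.1 p.2 0⟩
    set T2 : Set ((α × (Fin n → α)) × β) :=
      {q | ∃ i : Fin n, D (q.1.2 i) q.2 ≤ D q.1.1 q.2} with hT2_def
    have hT2 : MeasurableSet T2 := by
      have hT2eq : T2 = ⋃ i : Fin n,
          {q : (α × (Fin n → α)) × β | D (q.1.2 i) q.2 ≤ D q.1.1 q.2} := by
        ext q; simp [hT2_def]
      rw [hT2eq]
      refine MeasurableSet.iUnion fun i => ?_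
      have m1 : Measurable fun q : (α × (Fin n → α)) × β => ((q.1.2 i, q.2) : α × β) :=
        ((measurable_pi_apply i).comp (measurable_snd.comp measurable_fst)).prodMk
          measurable_snd
      have m2 : Measurable fun q : (α × (Fin n → α)) × β => ((q.1.1, q.2) : α × β) :=
        (measurable_fst.comp measurable_fst).prodMk measurable_snd
      exact measurableSet_le (hD.comp m1) (hD.comp m2)
    set e := MeasurableEquiv.piFinSuccAbove (fun _ : Fin (n+1) => α) 0 with he_def
    have mp : MeasurePreserving e PM1 (P.prod PM2) :=
      measurePreserving_piFinSuccAbove (fun _ : Fin (n+1) => P) 0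
    set G : α × (Fin n → α) → ℝ≥0∞ :=
      fun q => (κ.comap Prod.fst measurable_fst) q (Prod.mk q ⁻¹' T2) with hG_def
    have hG : Measurable G :=
      Kernel.measurable_kernel_prodMk_left (κ := κ.comap Prod.fst measurable_fst) hT2
    have hec : ∀ c : Fin (n+1) → α, e c = (c 0, fun i => c (Fin.succAbove 0 i)) := by
      intro c
      rw [he_def]
      rw [MeasurableEquiv.piFinSuccAbove_apply]
      rfl
    have hpt : ∀ c : Fin (n+1) → α, κ0 c (Prod.mk c ⁻¹' E) = G (e c) := by
      intro c
      have hset : Prod.mk c ⁻¹' E = Prod.mk (e c) ⁻¹' T2 := by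
        ext y
        constructor
        · rintro ⟨j, hj, hle⟩
          obtain ⟨i, hi⟩ := Fin.exists_succAbove_eq hj
          refine ⟨i, ?_⟩
          show D ((e c).2 i) y ≤ D ((e c).1) y
          rw [hec c]
          simpa [hi] using hle
        · rintro ⟨i, hle⟩
          refine ⟨Fin.succAbove 0 i, Fin.succAbove_ne 0 i, ?_⟩
          have : D ((e c).2 i) y ≤ D ((e c).1) y := hle
          rw [hec c] at this
          simpa using this
      rw [hκ0, Kernel.comap_apply, hset, hG_def]
      simp only [Kernel.comap_apply]
      rw [hec c]
    have key : (PM1 ⊗ₘ κ0) E = ∫⁻ q, G q ∂(P.prod PM2) := by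
      rw [Measure.compProd_apply hE]
      rw [show (fun c => κ0 c (Prod.mk c ⁻¹' E)) = fun c => G (e c) from funext hpt]
      exact mp.lintegral_comp hG
    have key2 : ∫⁻ q, G q ∂(P.prod PM2)
        = ∫⁻ x, ∫⁻ y, PM2 {r | ((x, r), y) ∈ T2} ∂κ x ∂P := by
      rw [lintegral_prod G hG.aemeasurable]
      refine lintegral_congr fun x => ?_
      have hmx : Measurable fun z : (Fin n → α) × β =>
          (((x, z.1), z.2) : (α × (Fin n → α)) × β) :=
        (measurable_const.prodMk measurable_fst).prodMk measurable_snd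
      have hSx : MeasurableSet {z : (Fin n → α) × β | ((x, z.1), z.2) ∈ T2} := hmx hT2
      have h1 : ∀ r : Fin n → α, G (x, r)
          = κ x (Prod.mk r ⁻¹' {z : (Fin n → α) × β | ((x, z.1), z.2) ∈ T2}) := by
        intro r
        rw [hG_def]
        simp only [Kernel.comap_apply]
        rfl
      simp_rw [h1]
      rw [← Measure.prod_apply hSx]
      have h2 : (PM2.prod (κ x)) {z : (Fin n → α) × β | ((x, z.1), z.2) ∈ T2}
          = ((κ x).prod PM2)
            (Prod.swap ⁻¹' {z : (Fin n → α) × β | ((x, z.1), z.2) ∈ T2}) := by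
        rw [← Measure.prod_swap, Measure.map_apply measurable_swap hSx]
      rw [h2, Measure.prod_apply (measurable_swap hSx)]
      exact lintegral_congr fun y => rfl
    have hbound : ∀ (x : α) (y : β),
        PM2 {r | ((x, r), y) ∈ T2} ≤ g (x, y) := by
      intro x y
      refine le_min prob_le_one ?_
      have hset : {r : Fin n → α | ((x, r), y) ∈ T2}
          = ⋃ i : Fin n, Function.eval i ⁻¹' {x' | D x' y ≤ D x y} := by
        ext r; simp [hT2_def, Function.eval]
      rw [hset]
      calc PM2 (⋃ i : Fin n, Function.eval i ⁻¹' {x' | D x' y ≤ D x y})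
          ≤ ∑ i : Fin n, PM2 (Function.eval i ⁻¹' {x' | D x' y ≤ D x y}) :=
            measure_iUnion_fintype_le _ _
        _ = (n : ℝ≥0∞) * P {x' | D x' y ≤ D x y} := by
            rw [hPM2]
            simp_rw [pi_eval_pre]
            simp [Finset.card_univ, nsmul_eq_mul]
    calc (PM1 ⊗ₘ κ0) {p | φ p.1 p.2 ≠ 0} ≤ (PM1 ⊗ₘ κ0) E := measure_mono hsub
      _ = ∫⁻ x, ∫⁻ y, PM2 {r | ((x, r), y) ∈ T2} ∂κ x ∂P := by rw [key, key2]
      _ ≤ ∫⁻ x, ∫⁻ y, g (x, y) ∂κ x ∂P :=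
          lintegral_mono fun x => lintegral_mono fun y => hbound x y
      _ = ∫⁻ p, g p ∂μc := (Measure.lintegral_compProd hg).symm
  -- Step B
  have hfin : ∫⁻ p, g p ∂μc ≠ ⊤ := by
    refine ne_top_of_le_ne_top ?_ (lintegral_mono fun p => min_le_left _ _)
    simp [lintegral_one]
  have hRHS : (∫⁻ p, g p ∂μc).toReal
      = ∫ p : α × β,
          min 1 ((((n+1 : ℕ) : ℝ) - 1) * (P {x' | D x' p.2 ≤ D p.1 p.2}).toReal) ∂μc := by
    have h0 : (0:ℝ) ≤ (((n+1 : ℕ) : ℝ) - 1) := by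
      push_cast; linarith [Nat.cast_nonneg (α := ℝ) n]
    have hnonneg : 0 ≤ᵐ[μc] fun p : α × β =>
        min 1 ((((n+1 : ℕ) : ℝ) - 1) * (P {x' | D x' p.2 ≤ D p.1 p.2}).toReal) :=
      Filter.Eventually.of_forall fun p =>
        le_min zero_le_one (mul_nonneg h0 ENNReal.toReal_nonneg)
    have hmeas : AEStronglyMeasurable (fun p : α × β =>
        min 1 ((((n+1 : ℕ) : ℝ) - 1) * (P {x' | D x' p.2 ≤ D p.1 p.2}).toReal)) μc :=
      (measurable_const.min (hPm.ennreal_toReal.const_mul _)).aestronglyMeasurable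
    rw [integral_eq_lintegral_of_nonneg_ae hnonneg hmeas]
    congr 1
    refine lintegral_congr fun p => ?_
    have hne : (n : ℝ≥0∞) * P {x' | D x' p.2 ≤ D p.1 p.2} ≠ ⊤ :=
      ENNReal.mul_ne_top (ENNReal.natCast_ne_top n) (measure_ne_top _ _)
    have h1 : (((n+1 : ℕ) : ℝ) - 1) = (n:ℝ) := by push_cast; ring
    have h2 : min 1 ((((n+1 : ℕ) : ℝ) - 1) * (P {x' | D x' p.2 ≤ D p.1 p.2}).toReal)
        = (g p).toReal := by
      rw [h1, hg_def, ENNReal.toReal_min ENNReal.one_ne_top hne, ENNReal.toReal_mul,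
        ENNReal.toReal_one, ENNReal.toReal_natCast]
    have hgne : g p ≠ ⊤ := ne_top_of_le_ne_top ENNReal.one_ne_top (min_le_left _ _)
    rw [h2, ENNReal.ofReal_toReal hgne]
  calc ((PM1 ⊗ₘ κ0) {p | φ p.1 p.2 ≠ 0}).toReal
      ≤ (∫⁻ p, g p ∂μc).toReal := ENNReal.toReal_mono hfin stepA
    _ = _ := by rw [hRHS]
end
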